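/- Under the recursion of the previous statement, if additionally y_rᵀ s_r ≥ λ ‖s_r‖² for all r with λ > 0, then det(B_M) ≥ det(B_0) · λ^M / (trace(B_0) + Λ M)^M. -/

import Mathlib

open Matrix Finset

/-- BFGS update formula. -/
noncomputable def bfgsUpdate {n : ℕ} (B : Matrix (Fin n) (Fin n) ℝ)
    (s y : Fin n → ℝ) : Matrix (Fin n) (Fin n) ℝ :=
  B - (s ⬝ᵥ B.mulVec s)⁻¹ • (B * vecMulVec s s * B) + (y ⬝ᵥ s)⁻¹ • vecMulVec y y

/-!
Each BFGS step multiplies the determinant by `(yᵀs)/(sᵀBs)` (a rank-two matrix determinant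
lemma) and raises the trace by at most `‖y‖²/(yᵀs) ≤ Λ`. Since `sᵀBs ≤ tr(B)‖s‖²` for positive
semidefinite `B`, the factor is at least `λ/tr(B_r) ≥ λ/(tr(B_0) + ΛM)` at every step `r < M`.
-/

namespace Matrix

variable {ι α : Type*} [Fintype ι]

theorem det_add_vecMulVec_add_vecMulVec [CommRing α] [DecidableEq ι] {A : Matrix ι ι α}
    (hA : IsUnit A.det) (u₁ v₁ u₂ v₂ : ι → α) :
    (A + vecMulVec u₁ v₁ + vecMulVec u₂ v₂).det =
      A.det * ((1 + v₁ ⬝ᵥ A⁻¹ *ᵥ u₁) * (1 + v₂ ⬝ᵥ A⁻¹ *ᵥ u₂) -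
        (v₁ ⬝ᵥ A⁻¹ *ᵥ u₂) * (v₂ ⬝ᵥ A⁻¹ *ᵥ u₁)) := by
  let U : Matrix ι (Fin 2) α := (of ![u₁, u₂])ᵀ
  let V : Matrix (Fin 2) ι α := of ![v₁, v₂]
  have hUV : U * V = vecMulVec u₁ v₁ + vecMulVec u₂ v₂ := by
    ext i j
    simp [U, V, mul_apply, Fin.sum_univ_two, vecMulVec_apply]
  have hVAU : ∀ a b, (V * A⁻¹ * U) a b = ![v₁, v₂] a ⬝ᵥ A⁻¹ *ᵥ ![u₁, u₂] b := by
    intro a b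
    rw [Matrix.mul_assoc, mul_apply']
    rfl
  rw [add_assoc, ← hUV, det_add_mul U V hA, det_fin_two]
  simp [hVAU]

theorem IsSymm.mul_vecMulVec_self_mul [CommSemiring α] {A : Matrix ι ι α} (hA : A.IsSymm)
    (x : ι → α) : A * vecMulVec x x * A = vecMulVec (A *ᵥ x) (A *ᵥ x) := by
  rw [mul_vecMulVec, vecMulVec_mul, ← mulVec_transpose, hA.eq]

theorem PosSemidef.dotProduct_mulVec_le_trace_mul {A : Matrix ι ι ℝ} (hA : A.PosSemidef)
    (x : ι → ℝ) : x ⬝ᵥ A *ᵥ x ≤ A.trace * (x ⬝ᵥ x) := by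
  obtain ⟨m, v, rfl⟩ := posSemidef_iff_eq_sum_vecMulVec.mp hA
  simp only [star_trivial, sum_mulVec, dotProduct_sum, trace_sum, trace_vecMulVec, sum_mul]
  refine sum_le_sum fun i _ => ?_
  calc x ⬝ᵥ (vecMulVec (v i) (v i) *ᵥ x) = (∑ j, v i j * x j) ^ 2 := by
        rw [vecMulVec_mulVec, op_smul_eq_smul, dotProduct_smul, smul_eq_mul, dotProduct_comm x,
          sq]
        rfl
    _ ≤ (∑ j, v i j ^ 2) * ∑ j, x j ^ 2 := sum_mul_sq_le_sq_mul_sq _ _ _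
    _ = v i ⬝ᵥ v i * (x ⬝ᵥ x) := by simp only [dotProduct, sq]

end Matrix

section Update

variable {n : ℕ} {B : Matrix (Fin n) (Fin n) ℝ} {s y : Fin n → ℝ}

theorem bfgsUpdate_eq_add_vecMulVec (hB : B.IsSymm) :
    bfgsUpdate B s y = B + vecMulVec (-(s ⬝ᵥ B *ᵥ s)⁻¹ • B *ᵥ s) (B *ᵥ s) +
      vecMulVec ((y ⬝ᵥ s)⁻¹ • y) y := by
  rw [bfgsUpdate, hB.mul_vecMulVec_self_mul, smul_vecMulVec, smul_vecMulVec, neg_smul,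
    sub_eq_add_neg]

theorem det_bfgsUpdate (hB : B.IsSymm) (hdet : IsUnit B.det) (hc : s ⬝ᵥ B *ᵥ s ≠ 0) :
    (bfgsUpdate B s y).det = B.det * (y ⬝ᵥ s) / (s ⬝ᵥ B *ᵥ s) := by
  have hinv : B⁻¹ *ᵥ B *ᵥ s = s := by
    rw [mulVec_mulVec, nonsing_inv_mul _ hdet, one_mulVec]
  have hdot : ∀ w, (B *ᵥ s) ⬝ᵥ w = s ⬝ᵥ B *ᵥ w := by
    intro w
    rw [dotProduct_mulVec, ← mulVec_transpose, hB.eq]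
  rw [bfgsUpdate_eq_add_vecMulVec hB, det_add_vecMulVec_add_vecMulVec hdet]
  simp only [mulVec_smul, dotProduct_smul, smul_eq_mul, hinv, hdot, mulVec_mulVec,
    mul_nonsing_inv _ hdet, one_mulVec]
  rw [dotProduct_comm s y]
  field_simp
  ring

theorem trace_bfgsUpdate (hB : B.IsSymm) :
    (bfgsUpdate B s y).trace =
      B.trace - (s ⬝ᵥ B *ᵥ s)⁻¹ * ((B *ᵥ s) ⬝ᵥ (B *ᵥ s)) + (y ⬝ᵥ s)⁻¹ * (y ⬝ᵥ y) := by
  rw [bfgsUpdate, hB.mul_vecMulVec_self_mul, trace_add, trace_sub, trace_smul, trace_smul,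
    trace_vecMulVec, trace_vecMulVec, smul_eq_mul, smul_eq_mul]

theorem trace_bfgsUpdate_le {Lam : ℝ} (hB : B.PosSemidef) (hys : 0 < y ⬝ᵥ s)
    (hy : y ⬝ᵥ y ≤ Lam * (y ⬝ᵥ s)) : (bfgsUpdate B s y).trace ≤ B.trace + Lam := by
  rw [trace_bfgsUpdate (isHermitian_iff_isSymm.mp hB.isHermitian)]
  have hremoved : 0 ≤ (s ⬝ᵥ B *ᵥ s)⁻¹ * ((B *ᵥ s) ⬝ᵥ (B *ᵥ s)) :=
    mul_nonneg (inv_nonneg.mpr (by simpa using hB.dotProduct_mulVec_nonneg s))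
      (by simpa using dotProduct_star_self_nonneg (B *ᵥ s))
  have hadded : (y ⬝ᵥ s)⁻¹ * (y ⬝ᵥ y) ≤ Lam := by
    rwa [inv_mul_le_iff₀ hys, mul_comm]
  linarith

theorem det_mul_div_le_det_bfgsUpdate {lam T : ℝ} (hB : B.PosDef) (hT : B.trace ≤ T)
    (hys : 0 < y ⬝ᵥ s) (hlam : lam * (s ⬝ᵥ s) ≤ y ⬝ᵥ s) :
    B.det * (lam / T) ≤ (bfgsUpdate B s y).det := by
  have hs : s ≠ 0 := by
    rintro rfl
    simp at hys
  have hc : 0 < s ⬝ᵥ B *ᵥ s := by simpa using hB.dotProduct_mulVec_pos hs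
  have hss : 0 < s ⬝ᵥ s := by simpa using dotProduct_star_self_pos_iff.mpr hs
  have hcT : s ⬝ᵥ B *ᵥ s ≤ T * (s ⬝ᵥ s) :=
    (hB.posSemidef.dotProduct_mulVec_le_trace_mul s).trans (by gcongr)
  have hratio : lam / T ≤ (y ⬝ᵥ s) / (s ⬝ᵥ B *ᵥ s) :=
    calc lam / T = lam * (s ⬝ᵥ s) / (T * (s ⬝ᵥ s)) := (mul_div_mul_right _ _ hss.ne').symm
      _ ≤ (y ⬝ᵥ s) / (s ⬝ᵥ B *ᵥ s) := div_le_div₀ hys.le hlam hc hcT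
  rw [det_bfgsUpdate (isHermitian_iff_isSymm.mp hB.isHermitian) hB.det_pos.ne'.isUnit hc.ne',
    mul_div_assoc]
  exact mul_le_mul_of_nonneg_left hratio hB.det_pos.le

end Update

section Iterates

variable {n M : ℕ} {B : ℕ → Matrix (Fin n) (Fin n) ℝ} {s y : ℕ → Fin n → ℝ}

theorem trace_bfgs_iterate_le {Lam : ℝ} (hpos : ∀ r < M, (B r).PosDef)
    (hyspos : ∀ r < M, 0 < y r ⬝ᵥ s r) (hcurv : ∀ r < M, y r ⬝ᵥ y r ≤ Lam * (y r ⬝ᵥ s r))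
    (hrec : ∀ r < M, B (r + 1) = bfgsUpdate (B r) (s r) (y r)) :
    ∀ r ≤ M, (B r).trace ≤ (B 0).trace + Lam * r := by
  intro r
  induction r with
  | zero => simp
  | succ r ih =>
    intro (hr : r < M)
    rw [hrec r hr]
    have := trace_bfgsUpdate_le (hpos r hr).posSemidef (hyspos r hr) (hcurv r hr)
    push_cast
    linarith [ih hr.le]

theorem det_bfgs_iterate_ge {lam T : ℝ} (hpos : ∀ r < M, (B r).PosDef)
    (hyspos : ∀ r < M, 0 < y r ⬝ᵥ s r) (hys : ∀ r < M, lam * (s r ⬝ᵥ s r) ≤ y r ⬝ᵥ s r)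
    (hrec : ∀ r < M, B (r + 1) = bfgsUpdate (B r) (s r) (y r))
    (hT : ∀ r < M, (B r).trace ≤ T) (hlamT : 0 ≤ lam / T) :
    ∀ r ≤ M, (B 0).det * (lam / T) ^ r ≤ (B r).det := by
  intro r
  induction r with
  | zero => simp
  | succ r ih =>
    intro (hr : r < M)
    rw [pow_succ, ← mul_assoc, hrec r hr]
    exact (mul_le_mul_of_nonneg_right (ih hr.le) hlamT).trans
      (det_mul_div_le_det_bfgsUpdate (hpos r hr) (hT r hr) (hyspos r hr) (hys r hr))

end Iterates

theorem bfgs_recursion_det_bound_general {n M : ℕ}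
    (B : ℕ → Matrix (Fin n) (Fin n) ℝ) (s y : ℕ → Fin n → ℝ)
    (hpos : ∀ r < M, (B r).PosDef)
    (lam Lam : ℝ) (hlam : 0 < lam)
    (hys : ∀ r < M, lam * (s r ⬝ᵥ s r) ≤ y r ⬝ᵥ s r)
    (hyspos : ∀ r < M, 0 < y r ⬝ᵥ s r)
    (hcurv : ∀ r < M, (y r ⬝ᵥ y r) ≤ Lam * (y r ⬝ᵥ s r))
    (hrec : ∀ r < M, B (r + 1) = bfgsUpdate (B r) (s r) (y r)) :
    (B 0).det * lam ^ M / ((B 0).trace + Lam * M) ^ M ≤ (B M).det := by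
  rcases M.eq_zero_or_pos with rfl | hM
  · simp
  have hyy : 0 ≤ y 0 ⬝ᵥ y 0 := by simpa using dotProduct_star_self_nonneg (y 0)
  have hLam : 0 ≤ Lam := nonneg_of_mul_nonneg_left (hyy.trans (hcurv 0 hM)) (hyspos 0 hM)
  have htrace := trace_bfgs_iterate_le hpos hyspos hcurv hrec
  have hT : ∀ r < M, (B r).trace ≤ (B 0).trace + Lam * M := fun r hr =>
    (htrace r hr.le).trans (by gcongr)
  have hlamT : 0 ≤ lam / ((B 0).trace + Lam * M) :=
    div_nonneg hlam.le (add_nonneg (hpos 0 hM).posSemidef.trace_nonneg (by positivity))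
  rw [mul_div_assoc, ← div_pow]
  exact det_bfgs_iterate_ge hpos hyspos hys hrec hT hlamT M le_rfl

theorem bfgs_recursion_det_bound {n M : ℕ}
    (B : ℕ → Matrix (Fin n) (Fin n) ℝ) (s y : ℕ → Fin n → ℝ)
    (hB0 : (B 0).PosDef)
    (hpos : ∀ r < M, (B r).PosDef)
    (hs : ∀ r < M, s r ≠ 0)
    (lam Lam : ℝ) (hlam : 0 < lam) (hle : lam ≤ Lam)
    (hys : ∀ r < M, lam * (s r ⬝ᵥ s r) ≤ y r ⬝ᵥ s r)
    (hyspos : ∀ r < M, 0 < y r ⬝ᵥ s r)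
    (hcurv : ∀ r < M, (y r ⬝ᵥ y r) ≤ Lam * (y r ⬝ᵥ s r))
    (hrec : ∀ r < M, B (r + 1) = bfgsUpdate (B r) (s r) (y r)) :
    (B 0).det * lam ^ M / ((B 0).trace + Lam * M) ^ M ≤ (B M).det :=
  bfgs_recursion_det_bound_general B s y hpos lam Lam hlam hys hyspos hcurv hrec
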